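/- For metric spaces X and Y, the product X × Y equipped with the sum metric satisfies ℓ-asdim(X × Y) ≤ ℓ-asdim X + ℓ-asdim Y. -/

import Mathlib

/-- `X` admits a covering split into `m` families of subsets, each family
`R`-disjoint, with all members of diameter at most `D`. -/
def ColoredCover (X : Type*) [MetricSpace X] (m : ℕ) (R D : ℝ) : Prop :=
  ∃ B : Fin m → Set (Set X),
    (∀ x : X, ∃ i : Fin m, ∃ U ∈ B i, x ∈ U) ∧
    (∀ i : Fin m, ∀ U ∈ B i, ∀ x ∈ U, ∀ y ∈ U, dist x y ≤ D) ∧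
    (∀ i : Fin m, ∀ U ∈ B i, ∀ V ∈ B i, U ≠ V → ∀ x ∈ U, ∀ y ∈ V, R ≤ dist x y)

/-- `asdim X ≤ n`: for every sufficiently large `R > 0` there are `D > 0` and a
covering of `X` by `D`-bounded subsets split into `n+1` `R`-disjoint families. -/
def AsdimLE (X : Type*) [MetricSpace X] (n : ℕ) : Prop :=
  ∃ R₀ > (0 : ℝ), ∀ R ≥ R₀, ∃ D > (0 : ℝ), ColoredCover X (n + 1) R D

/-- `ℓ-asdim X ≤ n`: there is `C > 0` such that for every sufficiently large
`R > 0` there is a covering of `X` by `C·R`-bounded subsets split into `n+1`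
`R`-disjoint families. -/
def LAsdimLE (X : Type*) [MetricSpace X] (n : ℕ) : Prop :=
  ∃ C > (0 : ℝ), ∃ R₀ > (0 : ℝ), ∀ R ≥ R₀, ColoredCover X (n + 1) R (C * R)

/-- The asymptotic dimension of `X`, as an extended natural number. -/
noncomputable def asdim (X : Type*) [MetricSpace X] : ℕ∞ :=
  sInf {m : ℕ∞ | ∃ n : ℕ, m = (n : ℕ∞) ∧ AsdimLE X n}

/-- The linearly-controlled asymptotic dimension of `X`, as an extended
natural number. -/
noncomputable def lasdim (X : Type*) [MetricSpace X] : ℕ∞ :=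
  sInf {m : ℕ∞ | ∃ n : ℕ, m = (n : ℕ∞) ∧ LAsdimLE X n}

/-!
Cover `X` and `Y` with `n + 1` and `k + 1` colours at a scale `ρ` proportional to `R`, and take
`1`-Lipschitz bumps of height `r ~ ρ` around every colour class except the last one of each
factor. This maps `X × Y` to `ℝ^(n + k)`. Tile each coordinate axis by intervals of length
`(n + k) R` separated by gaps `R`, coloured periodically with `n + k + 1` colours: a point misses
the intervals of only one colour per coordinate, so by pigeonhole every point of `ℝ^(n + k)` lies
in a cube of a single colour, and cubes of one colour are `R`-apart. On a cube whose coordinate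
for a class starts above `0` that bump is positive, so the points are `r`-close to that class;
if no coordinate of a factor does, all its bumps are `< r` and the point lies in the last class.
Cutting the preimage of a cube by the `r`-neighbourhoods of members of these classes gives the
cover of the product.
-/

open Metric Set

section Bump

variable {X : Type*} [MetricSpace X]

open Classical in
/-- For empty `S` the bump is `0` rather than `r`, since `infDist x ∅` is the junk value `0`. -/
noncomputable def bump (r : ℝ) (S : Set X) (x : X) : ℝ :=
  if S.Nonempty then max 0 (r - infDist x S) else 0

theorem bump_of_mem {r : ℝ} (hr : 0 ≤ r) {S : Set X} {x : X} (hx : x ∈ S) : bump r S x = r := by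
  rw [bump, if_pos ⟨x, hx⟩, infDist_zero_of_mem hx, sub_zero, max_eq_right hr]

theorem exists_dist_lt_of_bump_pos {r : ℝ} {S : Set X} {x : X} (h : 0 < bump r S x) :
    ∃ u ∈ S, dist x u < r := by
  unfold bump at h
  split_ifs at h with hS
  · exact (infDist_lt_iff hS).1 (by linarith [lt_max_iff.1 h |>.resolve_left (lt_irrefl 0)])
  · exact absurd h (lt_irrefl 0)

theorem bump_le_add_dist (r : ℝ) (S : Set X) (x y : X) : bump r S x ≤ bump r S y + dist x y := by
  unfold bump
  split_ifs
  · have := infDist_le_infDist_add_dist (x := y) (y := x) (s := S)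
    rw [dist_comm] at this
    apply max_le (by positivity)
    linarith [le_max_right 0 (r - infDist y S)]
  · simp

end Bump

section Grid

/-- For a fixed colour `c < N + 1`, the intervals with `p ≡ c [ZMOD N + 1]` are `g`-separated,
and a point misses them for at most one colour. -/
def gridInterval (N : ℕ) (g : ℝ) (p : ℤ) : Set ℝ :=
  Icc (p * g) ((p + N) * g)

variable {N : ℕ} {g : ℝ}

theorem add_le_of_mem_gridInterval (hg : 0 ≤ g) {p q : ℤ} (hpq : p + N + 1 ≤ q) {s t : ℝ}
    (hs : s ∈ gridInterval N g p) (ht : t ∈ gridInterval N g q) : s + g ≤ t := by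
  have : ((p + N + 1 : ℤ) : ℝ) * g ≤ q * g := by gcongr
  push_cast at this
  linarith [hs.2, ht.1]

theorem eq_of_mem_gridInterval (hg : 0 ≤ g) {c : ℕ} {a b : ℤ} {s t : ℝ}
    (hs : s ∈ gridInterval N g (c + a * (N + 1))) (ht : t ∈ gridInterval N g (c + b * (N + 1)))
    (hst : s < t + g) (hts : t < s + g) : a = b := by
  rcases lt_trichotomy a b with hab | rfl | hab
  · linarith [add_le_of_mem_gridInterval hg (by nlinarith) hs ht]
  · rfl
  · linarith [add_le_of_mem_gridInterval hg (by nlinarith) ht hs]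

theorem eq_emod_of_forall_notMem_gridInterval (hg : 0 < g) {c : ℕ} (hc : c < N + 1) {t : ℝ}
    (h : ∀ a : ℤ, t ∉ gridInterval N g (c + a * (N + 1))) :
    (c : ℤ) = (⌊t / g⌋ + 1) % (N + 1) := by
  set p := ⌊t / g⌋
  have hN : (0 : ℤ) < N + 1 := by omega
  set s := (p - c) % (N + 1)
  set a := (p - c) / (N + 1)
  have hdecomp : s + a * (N + 1) = p - c := by rw [mul_comm]; exact Int.emod_add_mul_ediv _ _
  have hs₀ : 0 ≤ s := Int.emod_nonneg _ hN.ne'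
  have hsN : s = N := by
    have := Int.emod_lt_of_pos (p - c) hN
    by_contra hne
    have hlo : c + a * (N + 1) ≤ p := by omega
    have hhi : p + 1 ≤ c + a * (N + 1) + N := by omega
    replace hlo : ((c + a * (N + 1) : ℤ) : ℝ) ≤ p := by exact_mod_cast hlo
    replace hhi : ((p + 1 : ℤ) : ℝ) ≤ ((c + a * (N + 1) : ℤ) : ℝ) + N := by exact_mod_cast hhi
    push_cast at hhi
    refine h a ⟨?_, ?_⟩
    · calc _ ≤ (p : ℝ) * g := by gcongr
        _ ≤ t := (le_div_iff₀ hg).1 (Int.floor_le _)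
    · calc t ≤ (p + 1) * g := (div_le_iff₀ hg).1 (Int.lt_floor_add_one _).le
        _ ≤ _ := by push_cast; gcongr
  have : p + 1 = c + (a + 1) * (N + 1) := by linarith
  rw [this, Int.add_mul_emod_self_right, Int.emod_eq_of_lt (by omega) (by omega)]

theorem exists_color_forall_mem_gridInterval {ι : Type*} [Fintype ι] (hcard : Fintype.card ι ≤ N)
    (hg : 0 < g) (v : ι → ℝ) :
    ∃ c : Fin (N + 1), ∀ r, ∃ a : ℤ, v r ∈ gridInterval N g (c + a * (N + 1)) := by
  by_contra! h
  choose f hf using h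
  have hinj : Function.Injective f := fun c c' hcc' => by
    have h₁ := eq_emod_of_forall_notMem_gridInterval hg c.isLt (hf c)
    have h₂ := eq_emod_of_forall_notMem_gridInterval hg c'.isLt (hcc' ▸ hf c')
    exact Fin.ext (by omega)
  have := Fintype.card_le_of_injective f hinj
  simp only [Fintype.card_fin] at this
  omega

end Grid

section Thickening

variable {X : Type*} [MetricSpace X]

theorem dist_le_of_mem_thickening {r D : ℝ} {U : Set X} (hU : ∀ u ∈ U, ∀ v ∈ U, dist u v ≤ D)
    {x y : X} (hx : x ∈ thickening r U) (hy : y ∈ thickening r U) : dist x y ≤ D + 2 * r := by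
  obtain ⟨u, hu, hxu⟩ := mem_thickening_iff.1 hx
  obtain ⟨v, hv, hyv⟩ := mem_thickening_iff.1 hy
  linarith [dist_triangle4 x u v y, hU u hu v hv, dist_comm y v]

theorem eq_of_mem_thickening_of_dist_lt {r ρ : ℝ} {U V : Set X}
    (hUV : U ≠ V → ∀ u ∈ U, ∀ v ∈ V, ρ ≤ dist u v) {x y : X} (hx : x ∈ thickening r U)
    (hy : y ∈ thickening r V) (hxy : dist x y + 2 * r < ρ) : U = V := by
  by_contra hne
  obtain ⟨u, hu, hxu⟩ := mem_thickening_iff.1 hx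
  obtain ⟨v, hv, hyv⟩ := mem_thickening_iff.1 hy
  linarith [dist_triangle4 u x y v, hUV hne u hu v hv, dist_comm u x]

noncomputable def posIndexOrLast {n : ℕ} (p : Fin n → ℤ) : Fin (n + 1) :=
  if h : ∃ i, 0 < p i then h.choose.castSucc else Fin.last n

theorem exists_mem_thickening_of_bump_mem_gridInterval {n N : ℕ} {r g : ℝ} (hg : 0 < g)
    (hNg : N * g < r) {B : Fin (n + 1) → Set (Set X)} (hcov : ∀ x, ∃ i, ∃ U ∈ B i, x ∈ U)
    {p : Fin n → ℤ} {x : X} (hp : ∀ i, bump r (⋃₀ B i.castSucc) x ∈ gridInterval N g (p i)) :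
    ∃ U ∈ B (posIndexOrLast p), x ∈ thickening r U := by
  unfold posIndexOrLast
  split_ifs with h
  · have hbump : 0 < bump r (⋃₀ B h.choose.castSucc) x :=
      lt_of_lt_of_le (mul_pos (by exact_mod_cast h.choose_spec) hg) (hp _).1
    obtain ⟨u, ⟨U, hU, huU⟩, hxu⟩ := exists_dist_lt_of_bump_pos hbump
    exact ⟨U, hU, mem_thickening_iff.2 ⟨u, huU, hxu⟩⟩
  · simp only [not_exists, not_lt] at h
    have hr : 0 < r := lt_of_le_of_lt (by positivity) hNg
    obtain ⟨j, U, hU, hxU⟩ := hcov x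
    obtain ⟨i, rfl⟩ | rfl := Fin.eq_castSucc_or_eq_last j
    · have hpi : (p i : ℝ) * g ≤ 0 :=
        mul_nonpos_of_nonpos_of_nonneg (by exact_mod_cast h i) hg.le
      have := (hp i).2
      rw [bump_of_mem hr.le (mem_sUnion_of_mem hxU hU)] at this
      linarith
    · exact ⟨U, hU, self_subset_thickening hr U hxU⟩

end Thickening

section Product

variable {X Y : Type*} [MetricSpace X] [MetricSpace Y]

theorem WithLp.prod_dist_eq_of_L1' (z w : WithLp 1 (X × Y)) :
    dist z w = dist z.fst w.fst + dist z.snd w.snd := by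
  simp [WithLp.prod_dist_eq_add (p := 1) (by norm_num)]

theorem WithLp.dist_fst_le_of_L1 (z w : WithLp 1 (X × Y)) : dist z.fst w.fst ≤ dist z w := by
  rw [WithLp.prod_dist_eq_of_L1']; linarith [dist_nonneg (x := z.snd) (y := w.snd)]

theorem WithLp.dist_snd_le_of_L1 (z w : WithLp 1 (X × Y)) : dist z.snd w.snd ≤ dist z w := by
  rw [WithLp.prod_dist_eq_of_L1']; linarith [dist_nonneg (x := z.fst) (y := w.fst)]

variable {n k : ℕ} (Bx : Fin (n + 1) → Set (Set X)) (By : Fin (k + 1) → Set (Set Y)) (r g : ℝ)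

noncomputable def prodBumps (z : WithLp 1 (X × Y)) : Fin n ⊕ Fin k → ℝ :=
  Sum.elim (fun i => bump r (⋃₀ Bx i.castSucc) z.fst) (fun j => bump r (⋃₀ By j.castSucc) z.snd)

def prodCell (p : Fin n ⊕ Fin k → ℤ) (U : Set X) (V : Set Y) : Set (WithLp 1 (X × Y)) :=
  {z | (∀ s, prodBumps Bx By r z s ∈ gridInterval (n + k) g (p s)) ∧
    z.fst ∈ thickening r U ∧ z.snd ∈ thickening r V}

def prodFamily (c : ℕ) : Set (Set (WithLp 1 (X × Y))) :=
  {T | ∃ (a : Fin n ⊕ Fin k → ℤ) (U : Set X) (V : Set Y),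
    let p := fun s => (c : ℤ) + a s * (n + k + 1)
    U ∈ Bx (posIndexOrLast (p ∘ Sum.inl)) ∧ V ∈ By (posIndexOrLast (p ∘ Sum.inr)) ∧
    T = prodCell Bx By r g p U V}

theorem prodBumps_le_add_dist (z w : WithLp 1 (X × Y)) (s : Fin n ⊕ Fin k) :
    prodBumps Bx By r z s ≤ prodBumps Bx By r w s + dist z w := by
  cases s with
  | inl i =>
    simp only [prodBumps, Sum.elim_inl]
    linarith [bump_le_add_dist r (⋃₀ Bx i.castSucc) z.fst w.fst,
      WithLp.dist_fst_le_of_L1 z w]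
  | inr j =>
    simp only [prodBumps, Sum.elim_inr]
    linarith [bump_le_add_dist r (⋃₀ By j.castSucc) z.snd w.snd,
      WithLp.dist_snd_le_of_L1 z w]

variable {Bx By r g}

theorem exists_mem_prodFamily (hg : 0 < g) (hr : (n + k) * g < r)
    (hcovX : ∀ x, ∃ i, ∃ U ∈ Bx i, x ∈ U) (hcovY : ∀ y, ∃ j, ∃ V ∈ By j, y ∈ V)
    (z : WithLp 1 (X × Y)) : ∃ c : Fin (n + k + 1), ∃ T ∈ prodFamily Bx By r g c, z ∈ T := by
  obtain ⟨c, ha⟩ :=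
    exists_color_forall_mem_gridInterval (N := n + k) (by simp) hg (prodBumps Bx By r z)
  choose a ha using ha
  have hr' : ((n + k : ℕ) : ℝ) * g < r := by exact_mod_cast hr
  obtain ⟨U, hU, hzU⟩ :=
    exists_mem_thickening_of_bump_mem_gridInterval hg hr' hcovX fun i => ha (Sum.inl i)
  obtain ⟨V, hV, hzV⟩ :=
    exists_mem_thickening_of_bump_mem_gridInterval hg hr' hcovY fun j => ha (Sum.inr j)
  exact ⟨c, _, ⟨a, U, V, hU, hV, rfl⟩, ha, hzU, hzV⟩

theorem dist_le_of_mem_prodCell {Dx Dy : ℝ} {p : Fin n ⊕ Fin k → ℤ} {U : Set X} {V : Set Y}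
    (hU : ∀ u ∈ U, ∀ u' ∈ U, dist u u' ≤ Dx) (hV : ∀ v ∈ V, ∀ v' ∈ V, dist v v' ≤ Dy)
    {z w : WithLp 1 (X × Y)} (hz : z ∈ prodCell Bx By r g p U V)
    (hw : w ∈ prodCell Bx By r g p U V) : dist z w ≤ Dx + Dy + 4 * r := by
  rw [WithLp.prod_dist_eq_of_L1']
  linarith [dist_le_of_mem_thickening hU hz.2.1 hw.2.1, dist_le_of_mem_thickening hV hz.2.2 hw.2.2]

theorem eq_of_mem_prodFamily_of_dist_lt {ρ : ℝ} (hg : 0 < g) (hρ : g + 2 * r ≤ ρ)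
    (hsepX : ∀ i, ∀ U ∈ Bx i, ∀ U' ∈ Bx i, U ≠ U' → ∀ u ∈ U, ∀ u' ∈ U', ρ ≤ dist u u')
    (hsepY : ∀ j, ∀ V ∈ By j, ∀ V' ∈ By j, V ≠ V' → ∀ v ∈ V, ∀ v' ∈ V', ρ ≤ dist v v')
    {c : ℕ} {T T' : Set (WithLp 1 (X × Y))} (hT : T ∈ prodFamily Bx By r g c)
    (hT' : T' ∈ prodFamily Bx By r g c) {z z' : WithLp 1 (X × Y)} (hz : z ∈ T) (hz' : z' ∈ T')
    (hzz' : dist z z' < g) : T = T' := by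
  obtain ⟨a, U, V, hU, hV, rfl⟩ := hT
  obtain ⟨a', U', V', hU', hV', rfl⟩ := hT'
  have haa' : a = a' := funext fun s =>
    eq_of_mem_gridInterval hg.le (hz.1 s) (hz'.1 s)
      (by linarith [prodBumps_le_add_dist Bx By r z z' s])
      (by linarith [prodBumps_le_add_dist Bx By r z' z s, dist_comm z z'])
  subst haa'
  have hUU' : U = U' := eq_of_mem_thickening_of_dist_lt (hsepX _ U hU U' hU') hz.2.1 hz'.2.1
    (by linarith [WithLp.dist_fst_le_of_L1 z z'])
  have hVV' : V = V' := eq_of_mem_thickening_of_dist_lt (hsepY _ V hV V' hV') hz.2.2 hz'.2.2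
    (by linarith [WithLp.dist_snd_le_of_L1 z z'])
  rw [hUU', hVV']

/-- Grid gap `g = R` and bump height `r = (n + k + 1) R`; the factors are covered at scale
`(2 (n + k) + 3) R = R + 2 r`, so that `r`-neighbourhoods of distinct members stay `R`-apart. -/
theorem ColoredCover.prod {R Dx Dy : ℝ} (hR : 0 < R)
    (hX : ColoredCover X (n + 1) ((2 * (n + k) + 3) * R) Dx)
    (hY : ColoredCover Y (k + 1) ((2 * (n + k) + 3) * R) Dy) :
    ColoredCover (WithLp 1 (X × Y)) (n + k + 1) R (Dx + Dy + 4 * ((n + k + 1) * R)) := by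
  obtain ⟨Bx, hcovX, hdiamX, hsepX⟩ := hX
  obtain ⟨By, hcovY, hdiamY, hsepY⟩ := hY
  refine ⟨fun c => prodFamily Bx By ((n + k + 1) * R) R c,
    exists_mem_prodFamily hR (by nlinarith) hcovX hcovY, ?_, ?_⟩
  · rintro c T ⟨a, U, V, hU, hV, rfl⟩ z hz w hw
    exact dist_le_of_mem_prodCell (hdiamX _ U hU) (hdiamY _ V hV) hz hw
  · intro c T hT T' hT' hne z hz z' hz'
    by_contra! hzz'
    exact hne (eq_of_mem_prodFamily_of_dist_lt hR (by linarith) hsepX hsepY hT hT' hz hz' hzz')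

end Product

theorem LAsdimLE.prod {X Y : Type*} [MetricSpace X] [MetricSpace Y] {n k : ℕ}
    (hX : LAsdimLE X n) (hY : LAsdimLE Y k) : LAsdimLE (WithLp 1 (X × Y)) (n + k) := by
  obtain ⟨Cx, hCx, Rx, hRx, hcovX⟩ := hX
  obtain ⟨Cy, hCy, Ry, -, hcovY⟩ := hY
  set K : ℝ := 2 * (n + k) + 3
  have hK : 1 ≤ K := by dsimp only [K]; linarith [n.cast_nonneg (α := ℝ), k.cast_nonneg (α := ℝ)]
  refine ⟨(Cx + Cy) * K + 4 * (n + k + 1), by positivity, max Rx Ry, lt_max_of_lt_left hRx,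
    fun R hR => ?_⟩
  have hR₀ : 0 < R := (lt_max_of_lt_left hRx).trans_le hR
  have hKR : max Rx Ry ≤ K * R := hR.trans (le_mul_of_one_le_left hR₀.le hK)
  have := ColoredCover.prod hR₀
    (hcovX _ ((le_max_left _ _).trans hKR)) (hcovY _ ((le_max_right _ _).trans hKR))
  convert this using 1
  ring

theorem lasdim_le {X : Type*} [MetricSpace X] {n : ℕ} (h : LAsdimLE X n) : lasdim X ≤ n :=
  sInf_le ⟨n, rfl, h⟩

theorem exists_lasdim_eq {X : Type*} [MetricSpace X] (h : lasdim X ≠ ⊤) :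
    ∃ n : ℕ, lasdim X = n ∧ LAsdimLE X n := by
  have hne : {m : ℕ∞ | ∃ n : ℕ, m = n ∧ LAsdimLE X n}.Nonempty :=
    Set.nonempty_iff_ne_empty.2 fun hempty => h (by rw [lasdim, hempty, sInf_empty])
  exact csInf_mem hne

/-- For metric spaces `X` and `Y`, the product `X × Y` with the sum metric
(here realized as the `L¹`-product `WithLp 1 (X × Y)`, whose distance is the
sum of the coordinate distances) satisfies
`ℓ-asdim (X × Y) ≤ ℓ-asdim X + ℓ-asdim Y`. -/
theorem lasdim_prod_le {X Y : Type*} [MetricSpace X] [MetricSpace Y] :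
    lasdim (WithLp 1 (X × Y)) ≤ lasdim X + lasdim Y := by
  rcases eq_or_ne (lasdim X) ⊤ with hX | hX
  · simp [hX]
  rcases eq_or_ne (lasdim Y) ⊤ with hY | hY
  · simp [hY]
  obtain ⟨n, hn, hXn⟩ := exists_lasdim_eq hX
  obtain ⟨k, hk, hYk⟩ := exists_lasdim_eq hY
  rw [hn, hk]
  exact_mod_cast lasdim_le (hXn.prod hYk)
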